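/- arXiv:2403.07310 — 3 statements merged into one kernel-verified Lean document; each statement's English description precedes it below -/
import Mathlib

section
/- Let φ(x) = 1/(1 + exp(−x)) be the sigmoid function and φ' its derivative. For every u ∈ ℝ and every σ ≠ 0, the strict inequality β₂(u,σ) − α₂(u,σ)²/(u² + 1) > 0 holds; that is, E_{z∼N(u,1)}[φ'(σ·z)²·z²] > (E_{z∼N(u,1)}[φ'(σ·z)·z²])²/(u² + 1). -/
open MeasureTheory ProbabilityTheory

/-- The sigmoid function `φ(x) = 1/(1 + exp(−x))`. -/
noncomputable def phi (x : ℝ) : ℝ := 1 / (1 + Real.exp (-x))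

/-- The derivative of the sigmoid, `φ' = φ(1−φ)`. -/
noncomputable def phi' (x : ℝ) : ℝ := phi x * (1 - phi x)

/-- `α_q(u,σ) = E_{z∼N(u,1)}[φ'(σ·z)·z^q]`. -/
noncomputable def alphaQ (q : ℕ) (u σ : ℝ) : ℝ :=
  ∫ z, phi' (σ * z) * z ^ q ∂(gaussianReal u 1)

/-- `β_q(u,σ) = E_{z∼N(u,1)}[φ'(σ·z)²·z^q]`. -/
noncomputable def betaQ (q : ℕ) (u σ : ℝ) : ℝ :=
  ∫ z, (phi' (σ * z)) ^ 2 * z ^ q ∂(gaussianReal u 1)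

/-!
Write `A = E[z²] = u² + 1` and `B = α₂`. Expanding the square gives
`E[(A φ'(σz) - B)² z²] = A (A β₂ - B²)`, so the claim is the strict Cauchy–Schwarz inequality
`B² < A β₂` for the weight `z²`. The integrand on the left is nonnegative, and it vanishes only
where `z = 0` or `φ'(σz) = B / A`. Since `φ'(x) = 1 / (4 cosh² (x / 2))` takes each value at most
at `±x`, this is a finite, hence Gaussian-null, set when `σ ≠ 0`.
-/

open scoped NNReal

theorem sq_integral_mul_lt_integral_mul_integral_sq_mul {α : Type*} [MeasurableSpace α]
    {μ : Measure α} {f w : α → ℝ} {C : ℝ} (hw : 0 ≤ w) (hwi : Integrable w μ)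
    (hf : AEStronglyMeasurable f μ) (hfC : ∀ᵐ x ∂μ, ‖f x‖ ≤ C)
    (hne : ∀ c, ¬ ∀ᵐ x ∂μ, w x = 0 ∨ f x = c) :
    (∫ x, f x * w x ∂μ) ^ 2 < (∫ x, w x ∂μ) * ∫ x, f x ^ 2 * w x ∂μ := by
  set A := ∫ x, w x ∂μ
  set B := ∫ x, f x * w x ∂μ
  have hA : 0 < A := by
    refine (integral_nonneg hw).lt_of_ne fun hA0 => hne 0 ?_
    filter_upwards [(integral_eq_zero_iff_of_nonneg hw hwi).1 hA0.symm] with x hx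
    exact Or.inl hx
  have hfw : Integrable (fun x => f x * w x) μ := hwi.bdd_mul hf hfC
  have hf2w : Integrable (fun x => f x ^ 2 * w x) μ :=
    hwi.bdd_mul (hf.pow 2) (c := C ^ 2) <| by
      filter_upwards [hfC] with x hx
      rw [norm_pow]
      exact pow_le_pow_left₀ (norm_nonneg _) hx 2
  have hsplit : ∀ x, (A * f x - B) ^ 2 * w x =
      A ^ 2 * (f x ^ 2 * w x) - 2 * A * B * (f x * w x) + B ^ 2 * w x := fun x => by ring
  have hint₁ : Integrable (fun x => A ^ 2 * (f x ^ 2 * w x) - 2 * A * B * (f x * w x)) μ :=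
    (hf2w.const_mul _).sub (hfw.const_mul _)
  have hint : Integrable (fun x => (A * f x - B) ^ 2 * w x) μ := by
    simp_rw [hsplit]
    exact hint₁.add (hwi.const_mul _)
  have hexpand : ∫ x, (A * f x - B) ^ 2 * w x ∂μ = A * (A * ∫ x, f x ^ 2 * w x ∂μ - B ^ 2) := by
    simp_rw [hsplit]
    rw [integral_add hint₁ (hwi.const_mul _), integral_sub (hf2w.const_mul _) (hfw.const_mul _),
      integral_const_mul, integral_const_mul, integral_const_mul]
    ring
  have hpos : 0 < ∫ x, (A * f x - B) ^ 2 * w x ∂μ := by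
    rw [integral_pos_iff_support_of_nonneg_ae
      (Filter.Eventually.of_forall fun x => mul_nonneg (sq_nonneg _) (hw x)) hint, pos_iff_ne_zero]
    have h := hne (B / A)
    rw [ae_iff] at h
    convert h using 3
    ext x
    simp only [Function.mem_support, Set.mem_ofPred_eq, ne_eq, mul_eq_zero,
      pow_eq_zero_iff two_ne_zero, sub_eq_zero, eq_div_iff hA.ne']
    rw [mul_comm (f x)]
    tauto
  nlinarith

lemma integral_sq_gaussianReal (μ : ℝ) (v : ℝ≥0) : ∫ x, x ^ 2 ∂gaussianReal μ v = μ ^ 2 + v := by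
  have h := variance_eq_sub (memLp_id_gaussianReal (μ := μ) (v := v) 2)
  simp only [variance_id_gaussianReal, Pi.pow_apply, id, integral_id_gaussianReal] at h
  linarith

lemma phi'_eq_inv_cosh_sq (x : ℝ) : phi' x = (4 * Real.cosh (x / 2) ^ 2)⁻¹ := by
  have hsq : Real.exp (-x) = Real.exp (-(x / 2)) ^ 2 := by rw [← Real.exp_nat_mul]; ring_nf
  have hinv : Real.exp (x / 2) * Real.exp (-(x / 2)) = 1 := by rw [← Real.exp_add]; simp
  rw [phi', phi, Real.cosh_eq, hsq]
  field_simp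
  linear_combination
    4 * (Real.exp (x / 2) * Real.exp (-(x / 2)) + 1 + 2 * Real.exp (-(x / 2)) ^ 2) * hinv

lemma measurable_phi' : Measurable phi' := by unfold phi' phi; fun_prop

lemma phi'_pos (x : ℝ) : 0 < phi' x := by rw [phi'_eq_inv_cosh_sq]; positivity

lemma phi'_le_inv_four (x : ℝ) : phi' x ≤ 4⁻¹ := by
  rw [phi'_eq_inv_cosh_sq]
  exact inv_anti₀ four_pos (by nlinarith [Real.one_le_cosh (x / 2)])

lemma phi'_eq_phi'_iff {x y : ℝ} : phi' x = phi' y ↔ |x| = |y| := by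
  rw [phi'_eq_inv_cosh_sq, phi'_eq_inv_cosh_sq, inv_inj, mul_right_inj' four_ne_zero,
    sq_eq_sq₀ (Real.cosh_pos _).le (Real.cosh_pos _).le, le_antisymm_iff, Real.cosh_le_cosh,
    Real.cosh_le_cosh, ← le_antisymm_iff, abs_div, abs_div, div_left_inj' (by norm_num)]

lemma finite_setOf_phi'_eq (c : ℝ) : {x | phi' x = c}.Finite := by
  by_cases h : ∃ x₀, phi' x₀ = c
  · obtain ⟨x₀, rfl⟩ := h
    refine (Set.toFinite {x₀, -x₀}).subset fun x hx => ?_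
    rcases abs_eq_abs.1 (phi'_eq_phi'_iff.1 hx) with rfl | rfl <;> simp
  · simp only [not_exists] at h
    simp [h]

lemma not_ae_sq_eq_zero_or_phi'_mul_eq {σ : ℝ} (hσ : σ ≠ 0) (u c : ℝ) :
    ¬ ∀ᵐ z ∂gaussianReal u 1, z ^ 2 = 0 ∨ phi' (σ * z) = c := by
  intro h
  have hfin : {z : ℝ | z ^ 2 = 0 ∨ phi' (σ * z) = c}.Finite := by
    rw [Set.ofPred_or]
    refine Set.Finite.union ((Set.finite_singleton 0).subset fun z hz => ?_)
      ((finite_setOf_phi'_eq c).preimage (mul_right_injective₀ hσ).injOn)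
    simpa using hz
  have hnull := measure_eq_zero_iff_ae_notMem.1 <|
    gaussianReal_absolutelyContinuous u one_ne_zero (hfin.measure_zero volume)
  obtain ⟨z, hz, hz'⟩ := (h.and hnull).exists
  exact hz' hz

theorem stmt_1 (u σ : ℝ) (hσ : σ ≠ 0) :
    betaQ 2 u σ - (alphaQ 2 u σ) ^ 2 / (u ^ 2 + 1) > 0 := by
  have hbound : ∀ z : ℝ, ‖phi' (σ * z)‖ ≤ 4⁻¹ := fun z => by
    rw [Real.norm_of_nonneg (phi'_pos _).le]
    exact phi'_le_inv_four _
  have hCS := sq_integral_mul_lt_integral_mul_integral_sq_mul (μ := gaussianReal u 1)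
    (f := fun z => phi' (σ * z)) (w := fun z => z ^ 2) sq_nonneg
    (memLp_id_gaussianReal 2).integrable_sq
    (measurable_phi'.comp (measurable_const_mul σ)).aestronglyMeasurable
    (ae_of_all _ hbound) (not_ae_sq_eq_zero_or_phi'_mul_eq hσ u)
  rw [integral_sq_gaussianReal, NNReal.coe_one] at hCS
  rw [gt_iff_lt, sub_pos, div_lt_iff₀ (by positivity)]
  unfold alphaQ betaQ
  linarith
end

section
/- For every μ ≥ 0 and every real k₁ > 3, there exists σ₀ > 0 such that for all σ ≥ σ₀, ∫_{μ+2σ}^{∞} (t − 2σ)² · e^{−t²/2} dt ≥ σ^{−k₁} · e^{−2μσ − 2σ²}. -/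
/-!
On `[μ + 2σ + 1/σ, μ + 2σ + 2/σ]`, an interval of length `1/σ` inside `[μ + 2σ, ∞)`, the factor
`(t - 2σ)²` is at least `1/σ²` and `exp (-t²/2)` is at least `exp (-(μ + 2σ + 2/σ)²/2)`, which for
`σ ≥ 1` is at least `exp (-2μσ - 2σ²)` times a constant depending only on `μ`. So the integral is at least a
constant times `σ⁻³ exp (-2μσ - 2σ²)`, and `σ ^ (-k₁)` is eventually below any constant multiple of
`σ⁻³` because `k₁ > 3`.
-/

open MeasureTheory Filter Real Set

theorem integrable_sub_sq_mul_exp_neg_mul_sq {b : ℝ} (hb : 0 < b) (c : ℝ) :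
    Integrable fun t : ℝ => (t - c) ^ 2 * exp (-b * t ^ 2) := by
  have h2 : Integrable fun t : ℝ => t ^ 2 * exp (-b * t ^ 2) := by
    simpa using integrable_rpow_mul_exp_neg_mul_sq hb (s := 2) (by norm_num)
  have h1 := (integrable_mul_exp_neg_mul_sq hb).const_mul (-2 * c)
  have h0 := (integrable_exp_neg_mul_sq hb).const_mul (c ^ 2)
  refine (h2.add (h1.add h0)).congr (Eventually.of_forall fun t => ?_)
  simp only [Pi.add_apply]
  ring

theorem mul_sub_le_setIntegral_of_le_on_Icc {f : ℝ → ℝ} {s : Set ℝ} {x y m : ℝ} (hxy : x ≤ y)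
    (hs : Icc x y ⊆ s) (hf : IntegrableOn f s) (hf0 : 0 ≤ᵐ[volume.restrict s] f)
    (hm : ∀ t ∈ Icc x y, m ≤ f t) : m * (y - x) ≤ ∫ t in s, f t := by
  calc m * (y - x) ≤ ∫ t in Icc x y, f t := by
        have := setIntegral_ge_of_const_le measurableSet_Icc (by simp) hm (hf.mono_set hs)
        rwa [measureReal_def, Real.volume_Icc, ENNReal.toReal_ofReal (by linarith), smul_eq_mul,
          mul_comm] at this
    _ ≤ ∫ t in s, f t := setIntegral_mono_set hf hf0 (Eventually.of_forall hs)

theorem sub_sq_mul_exp_le_of_mem_Icc {c x y t : ℝ} (hcx : c ≤ x) (hx : 0 ≤ x) (ht : t ∈ Icc x y) :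
    (x - c) ^ 2 * exp (-y ^ 2 / 2) ≤ (t - c) ^ 2 * exp (-t ^ 2 / 2) := by
  obtain ⟨hxt, hty⟩ := ht
  gcongr
  linarith

theorem eventually_rpow_neg_le_mul_rpow_neg {k l C : ℝ} (hlk : l < k) (hC : 0 < C) :
    ∀ᶠ σ in atTop, σ ^ (-k) ≤ C * σ ^ (-l) := by
  filter_upwards [eventually_gt_atTop 0,
    (tendsto_rpow_neg_atTop (sub_pos.2 hlk)).eventually (ge_mem_nhds hC)] with σ hσ hσC
  calc σ ^ (-k) = σ ^ (-(k - l)) * σ ^ (-l) := by rw [← rpow_add hσ]; ring_nf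
    _ ≤ C * σ ^ (-l) := by gcongr

theorem sq_add_two_mul_add_two_div_div_two_le {μ σ : ℝ} (hμ : 0 ≤ μ) (hσ : 1 ≤ σ) :
    (μ + 2 * σ + 2 / σ) ^ 2 / 2 ≤ 2 * μ * σ + 2 * σ ^ 2 + (μ ^ 2 / 2 + 2 * μ + 6) := by
  have hu : 2 / σ ≤ 2 := div_le_self zero_le_two hσ
  have hu0 : 0 ≤ 2 / σ := by positivity
  have hσu : σ * (2 / σ) = 2 := by field_simp
  nlinarith [mul_le_mul_of_nonneg_left hu hμ]

theorem rpow_neg_three_mul_exp_le_setIntegral_Ici {μ σ : ℝ} (hμ : 0 ≤ μ) (hσ : 0 < σ) :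
    σ ^ (-3 : ℝ) * exp (-(μ + 2 * σ + 2 / σ) ^ 2 / 2) ≤
      ∫ t in Ici (μ + 2 * σ), (t - 2 * σ) ^ 2 * exp (-t ^ 2 / 2) := by
  have hδ : 0 < 1 / σ := by positivity
  have hδ2 : 1 / σ ≤ 2 / σ := by gcongr; norm_num
  have hf : Integrable fun t : ℝ => (t - 2 * σ) ^ 2 * exp (-t ^ 2 / 2) := by
    simpa [neg_div, div_eq_inv_mul] using
      integrable_sub_sq_mul_exp_neg_mul_sq (b := 1 / 2) (by norm_num) (2 * σ)
  have hIcc := mul_sub_le_setIntegral_of_le_on_Icc (s := Ici (μ + 2 * σ)) (x := μ + 2 * σ + 1 / σ)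
    (y := μ + 2 * σ + 2 / σ) (by linarith)
    (fun t ht => mem_Ici.2 (by linarith [ht.1])) hf.integrableOn
    (Eventually.of_forall fun t => by positivity)
    (fun t => sub_sq_mul_exp_le_of_mem_Icc (by linarith) (by positivity))
  refine le_trans ?_ hIcc
  rw [rpow_neg hσ.le, show (3 : ℝ) = (3 : ℕ) by norm_num, rpow_natCast]
  calc (σ ^ 3)⁻¹ * exp (-(μ + 2 * σ + 2 / σ) ^ 2 / 2)
      = (1 / σ) ^ 2 * exp (-(μ + 2 * σ + 2 / σ) ^ 2 / 2) *
          (μ + 2 * σ + 2 / σ - (μ + 2 * σ + 1 / σ)) := by field_simp; ring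
    _ ≤ _ := by gcongr <;> linarith

theorem stmt_8 (μ : ℝ) (hμ : 0 ≤ μ) (k₁ : ℝ) (hk : 3 < k₁) :
    ∃ σ₀ > 0, ∀ σ : ℝ, σ₀ ≤ σ →
      (∫ t in Set.Ici (μ + 2 * σ), (t - 2 * σ) ^ 2 * Real.exp (-t ^ 2 / 2)) ≥
        σ ^ (-k₁) * Real.exp (-2 * μ * σ - 2 * σ ^ 2) := by
  set C := μ ^ 2 / 2 + 2 * μ + 6 with hC
  have hbound : ∀ᶠ σ in atTop, σ ^ (-k₁) * exp (-2 * μ * σ - 2 * σ ^ 2) ≤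
      ∫ t in Ici (μ + 2 * σ), (t - 2 * σ) ^ 2 * exp (-t ^ 2 / 2) := by
    filter_upwards [eventually_ge_atTop 1,
      eventually_rpow_neg_le_mul_rpow_neg hk (exp_pos (-C))] with σ hσ hσk
    calc σ ^ (-k₁) * exp (-2 * μ * σ - 2 * σ ^ 2)
        ≤ exp (-C) * σ ^ (-3 : ℝ) * exp (-2 * μ * σ - 2 * σ ^ 2) := by gcongr
      _ = σ ^ (-3 : ℝ) * exp (-2 * μ * σ - 2 * σ ^ 2 - C) := by
          rw [sub_eq_add_neg _ C, exp_add]; ring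
      _ ≤ σ ^ (-3 : ℝ) * exp (-(μ + 2 * σ + 2 / σ) ^ 2 / 2) := by
          gcongr; linarith [sq_add_two_mul_add_two_div_div_two_le hμ hσ, hC]
      _ ≤ _ := rpow_neg_three_mul_exp_le_setIntegral_Ici hμ (by linarith)
  obtain ⟨σ₀, hσ₀⟩ := eventually_atTop.1 hbound
  exact ⟨max σ₀ 1, by positivity, fun σ hσ => hσ₀ σ (le_of_max_le_left hσ)⟩
end

section
/- Let x be a random vector in ℝ^d distributed according to the Gaussian mixture Σ_{l=1}^L λ_l N(μ_l, Σ_l). For every integer t ≥ 1, E[‖x‖^{2t}] ≤ d^t · (2t−1)!! · Σ_{l=1}^L λ_l (‖μ_l‖ + ‖Σ_l‖^{1/2})^{2t}. -/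
open MeasureTheory ProbabilityTheory RealInnerProductSpace Matrix

/-- The standard Gaussian measure on `ℝ^d` (i.i.d. `N(0,1)` coordinates). -/
noncomputable def stdGaussian (d : ℕ) : Measure (EuclideanSpace ℝ (Fin d)) :=
  (Measure.pi fun _ : Fin d => gaussianReal 0 1).map
    (WithLp.equiv 2 (Fin d → ℝ)).symm

/-- The Gaussian measure `N(μ, A·Aᵀ)` on `ℝ^d`: the law of `μ + A·z` for a
standard Gaussian vector `z`. -/
noncomputable def gaussianVec {d : ℕ} (μ : EuclideanSpace ℝ (Fin d))
    (A : Matrix (Fin d) (Fin d) ℝ) : Measure (EuclideanSpace ℝ (Fin d)) :=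
  (stdGaussian d).map (fun z => μ + Matrix.toEuclideanLin A z)

/-- The Gaussian mixture `Σ_l λ_l · N(μ_l, A_l·A_lᵀ)` on `ℝ^d`. -/
noncomputable def gaussianMixture {d L : ℕ} (lam : Fin L → ℝ)
    (μ : Fin L → EuclideanSpace ℝ (Fin d)) (A : Fin L → Matrix (Fin d) (Fin d) ℝ) :
    Measure (EuclideanSpace ℝ (Fin d)) :=
  ∑ l, ENNReal.ofReal (lam l) • gaussianVec (μ l) (A l)

/-- The spectral (operator) norm of a matrix, i.e. the operator norm of the
induced linear map between Euclidean spaces. -/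
noncomputable def specNorm {d : ℕ} (M : Matrix (Fin d) (Fin d) ℝ) : ℝ :=
  ‖LinearMap.toContinuousLinearMap (Matrix.toEuclideanLin M)‖

/-!
Write `a = ‖m‖` and `b = ‖A‖`; a component `N(m, AAᵀ)` is the law of `m + Az` with `z` standard
Gaussian, and `‖m + Az‖ ≤ a + b‖z‖`. Convexity of `r ↦ rⁿ`, with weights `a/(a+b)` and `b/(a+b)`,
gives `(a + b‖z‖)ⁿ ≤ (a + b)ⁿ⁻¹ (a + b‖z‖ⁿ)`, so `E‖m + Az‖ⁿ ≤ M (a + b)ⁿ` whenever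
`E‖z‖ⁿ ≤ M` and `M ≥ 1`. For `n = 2t` the power-mean inequality
`‖z‖²ᵗ ≤ dᵗ⁻¹ ∑ zᵢ²ᵗ` and the one-dimensional moments `E zᵢ²ᵗ = (2t-1)‼` give
`M = dᵗ (2t-1)‼`. Finally `‖AAᵀ‖^{1/2} = ‖A‖` by the C*-identity, and the moment of the
mixture is the `λ`-weighted sum of the moments of its components.
-/

open Real Set
open scoped Nat Matrix.Norms.L2Operator

theorem integrable_pow_gaussianReal (n : ℕ) :
    Integrable (fun x : ℝ => x ^ n) (gaussianReal 0 1) :=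
  integrable_pow_of_mem_interior_integrableExpSet (X := id)
    (by simp [integrableExpSet_id_gaussianReal]) n

-- The integrand is even, so the moment is a Gamma integral: `Γ(t + 1/2) = (2t-1)‼ √π / 2^t`.
theorem integral_pow_two_mul_gaussianReal (t : ℕ) :
    ∫ x, x ^ (2 * t) ∂gaussianReal 0 1 = (2 * t - 1 : ℕ)‼ := by
  set f : ℝ → ℝ := fun y => (√(2 * π))⁻¹ * (y ^ (2 * t : ℝ) * exp (-(1 / 2) * y ^ (2 : ℝ)))
  have hpdf : ∀ x : ℝ, gaussianPDFReal 0 1 x • x ^ (2 * t) = f |x| := by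
    intro x
    simp only [f, gaussianPDFReal, smul_eq_mul, NNReal.coe_one, mul_one, sub_zero]
    rw [rpow_two, sq_abs, show ((2 * t : ℝ)) = ((2 * t : ℕ) : ℝ) by push_cast; ring,
      rpow_natCast, (even_two_mul t).pow_abs]
    ring_nf
  have hscale : ((1 : ℝ) / 2) ^ (-(2 * t + 1 : ℝ) / 2) = 2 ^ t * √2 := by
    rw [one_div, inv_rpow zero_le_two, ← rpow_neg zero_le_two, neg_div, neg_neg,
      show (2 * t + 1 : ℝ) / 2 = t + 1 / 2 by ring, rpow_add two_pos, rpow_natCast,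
      sqrt_eq_rpow]
  have ht : (-1 : ℝ) < 2 * t := by have := t.cast_nonneg (α := ℝ); linarith
  rw [integral_gaussianReal_eq_integral_smul one_ne_zero]
  simp only [hpdf]
  rw [integral_comp_abs, integral_const_mul,
    integral_rpow_mul_exp_neg_mul_rpow two_pos ht (by norm_num), hscale,
    show (2 * t + 1 : ℝ) / 2 = t + 1 / 2 by ring, Gamma_nat_add_half, sqrt_mul zero_le_two]
  field_simp

theorem factorial_two_mul_div_eq_doubleFactorial (t : ℕ) :
    ((2 * t)! : ℝ) / (2 ^ t * t !) = (2 * t - 1 : ℕ)‼ := by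
  cases t with
  | zero => simp
  | succ t =>
    have h := Nat.factorial_eq_mul_doubleFactorial (2 * t + 1)
    rw [show 2 * t + 1 + 1 = 2 * (t + 1) by ring, Nat.doubleFactorial_two_mul] at h
    rw [h, show 2 * (t + 1) - 1 = 2 * t + 1 by omega]
    push_cast
    field_simp

theorem norm_pow_two_mul_le_card_pow_mul_sum {ι : Type*} [Fintype ι] {t : ℕ} (ht : 1 ≤ t)
    (x : EuclideanSpace ℝ ι) :
    ‖x‖ ^ (2 * t) ≤ (Fintype.card ι : ℝ) ^ (t - 1) * ∑ i, x i ^ (2 * t) := by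
  obtain ⟨m, rfl⟩ := Nat.exists_eq_add_of_le' ht
  rcases isEmpty_or_nonempty ι with hι | hι
  · simp [Subsingleton.elim x 0]
  have hmean := pow_sum_div_card_le_sum_pow (s := Finset.univ) (f := fun i => x i ^ 2)
    (fun i _ => sq_nonneg _) m
  rw [div_le_iff₀' (by positivity)] at hmean
  simp only [Finset.card_univ, ← pow_mul] at hmean
  rw [Nat.add_sub_cancel, pow_mul, EuclideanSpace.real_norm_sq_eq]
  simpa [mul_comm] using hmean

section StdGaussian

variable {d t : ℕ}

instance : IsProbabilityMeasure (stdGaussian d) :=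
  Measure.isProbabilityMeasure_map (MeasurableEquiv.toLp 2 (Fin d → ℝ)).measurable.aemeasurable

theorem integral_stdGaussian (f : EuclideanSpace ℝ (Fin d) → ℝ) :
    ∫ x, f x ∂stdGaussian d
      = ∫ y, f (WithLp.toLp 2 y) ∂Measure.pi fun _ : Fin d => gaussianReal 0 1 :=
  integral_map_equiv (MeasurableEquiv.toLp 2 (Fin d → ℝ)) f

theorem integrable_stdGaussian_iff (f : EuclideanSpace ℝ (Fin d) → ℝ) :
    Integrable f (stdGaussian d) ↔
      Integrable (fun y => f (WithLp.toLp 2 y)) (Measure.pi fun _ : Fin d => gaussianReal 0 1) :=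
  integrable_map_equiv (MeasurableEquiv.toLp 2 (Fin d → ℝ)) f

variable (d) in
theorem integrable_sum_pow_gaussianPi (n : ℕ) :
    Integrable (fun y : Fin d → ℝ => ∑ i, y i ^ n) (Measure.pi fun _ => gaussianReal 0 1) :=
  integrable_finsetSum _ fun _ _ => integrable_comp_eval (integrable_pow_gaussianReal n)

theorem integral_eval_pow_gaussianPi (i : Fin d) (n : ℕ) :
    ∫ y, y i ^ n ∂(Measure.pi fun _ : Fin d => gaussianReal 0 1)
      = ∫ x, x ^ n ∂gaussianReal 0 1 :=
  integral_comp_eval (X := fun _ => ℝ) (μ := fun _ => gaussianReal 0 1) (i := i)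
    (f := fun x : ℝ => x ^ n) (integrable_pow_gaussianReal n).aestronglyMeasurable

theorem integrable_norm_pow_two_mul_stdGaussian (ht : 1 ≤ t) :
    Integrable (fun x => ‖x‖ ^ (2 * t)) (stdGaussian d) := by
  rw [integrable_stdGaussian_iff]
  refine ((integrable_sum_pow_gaussianPi d (2 * t)).const_mul ((d : ℝ) ^ (t - 1))).mono'
    (by fun_prop) (ae_of_all _ fun y => ?_)
  rw [Real.norm_of_nonneg (by positivity)]
  simpa using norm_pow_two_mul_le_card_pow_mul_sum ht (WithLp.toLp 2 y)

theorem integral_norm_pow_two_mul_stdGaussian_le (ht : 1 ≤ t) :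
    ∫ x, ‖x‖ ^ (2 * t) ∂stdGaussian d ≤ (d : ℝ) ^ t * (2 * t - 1 : ℕ)‼ := by
  rw [integral_stdGaussian]
  calc ∫ y, ‖WithLp.toLp 2 y‖ ^ (2 * t) ∂(Measure.pi fun _ : Fin d => gaussianReal 0 1)
      ≤ ∫ y, (d : ℝ) ^ (t - 1) * ∑ i, y i ^ (2 * t)
          ∂(Measure.pi fun _ : Fin d => gaussianReal 0 1) :=
        integral_mono_of_nonneg (ae_of_all _ fun _ => by positivity)
          ((integrable_sum_pow_gaussianPi d (2 * t)).const_mul _)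
          (ae_of_all _ fun y => by
            simpa using norm_pow_two_mul_le_card_pow_mul_sum ht (WithLp.toLp 2 y))
    _ = (d : ℝ) ^ (t - 1) * (d * ((2 * t - 1 : ℕ)‼ : ℝ)) := by
        rw [integral_const_mul, integral_finsetSum]
        · simp only [integral_eval_pow_gaussianPi, integral_pow_two_mul_gaussianReal,
            Finset.sum_const, Finset.card_univ, Fintype.card_fin, nsmul_eq_mul]
        · exact fun i _ => integrable_comp_eval (integrable_pow_gaussianReal _)
    _ = (d : ℝ) ^ t * (2 * t - 1 : ℕ)‼ := by
        obtain ⟨m, rfl⟩ := Nat.exists_eq_add_of_le' ht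
        simp only [Nat.add_sub_cancel, pow_succ]
        ring

end StdGaussian

theorem add_mul_pow_le {a b r : ℝ} (ha : 0 ≤ a) (hb : 0 ≤ b) (hr : 0 ≤ r) {n : ℕ}
    (hn : 1 ≤ n) : (a + b * r) ^ n ≤ (a + b) ^ (n - 1) * (a + b * r ^ n) := by
  obtain ⟨k, rfl⟩ := Nat.exists_eq_add_of_le' hn
  rcases (add_nonneg ha hb).eq_or_lt with hab | hab
  · obtain ⟨rfl, rfl⟩ : a = 0 ∧ b = 0 := ⟨by linarith, by linarith⟩
    simp
  have hconv := (convexOn_pow (k + 1)).2 (mem_Ici.2 zero_le_one) (mem_Ici.2 hr)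
    (div_nonneg ha hab.le) (div_nonneg hb hab.le) (by field_simp)
  simp only [smul_eq_mul, mul_one, one_pow] at hconv
  calc (a + b * r) ^ (k + 1)
      = (a + b) ^ (k + 1) * (a / (a + b) + b / (a + b) * r) ^ (k + 1) := by
        rw [← mul_pow]; congr 1; field_simp
    _ ≤ (a + b) ^ (k + 1) * (a / (a + b) + b / (a + b) * r ^ (k + 1)) := by gcongr
    _ = (a + b) ^ (k + 1 - 1) * (a + b * r ^ (k + 1)) := by
        rw [Nat.add_sub_cancel, pow_succ]; field_simp

section AffineImage

variable {E F : Type*} [NormedAddCommGroup E] [NormedSpace ℝ E] [NormedAddCommGroup F]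
  [NormedSpace ℝ F] {n : ℕ} (m : F) (T : E →L[ℝ] F)

theorem norm_add_apply_pow_le (hn : 1 ≤ n) (z : E) :
    ‖m + T z‖ ^ n ≤ (‖m‖ + ‖T‖) ^ (n - 1) * (‖m‖ + ‖T‖ * ‖z‖ ^ n) :=
  calc ‖m + T z‖ ^ n ≤ (‖m‖ + ‖T‖ * ‖z‖) ^ n := by
        gcongr; exact (norm_add_le _ _).trans (by gcongr; exact T.le_opNorm z)
    _ ≤ _ := add_mul_pow_le (norm_nonneg _) (norm_nonneg _) (norm_nonneg _) hn

variable [MeasurableSpace E] {ν : Measure E}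

theorem integral_norm_add_apply_pow_le [IsProbabilityMeasure ν] (hn : 1 ≤ n)
    (hint : Integrable (fun z => ‖z‖ ^ n) ν) {M : ℝ} (hM : ∫ z, ‖z‖ ^ n ∂ν ≤ M) (hM1 : 1 ≤ M) :
    ∫ z, ‖m + T z‖ ^ n ∂ν ≤ M * (‖m‖ + ‖T‖) ^ n := by
  set a := ‖m‖
  set b := ‖T‖
  calc ∫ z, ‖m + T z‖ ^ n ∂ν ≤ ∫ z, (a + b) ^ (n - 1) * (a + b * ‖z‖ ^ n) ∂ν :=
        integral_mono_of_nonneg (ae_of_all _ fun _ => by positivity)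
          (((integrable_const _).add (hint.const_mul _)).const_mul _)
          (ae_of_all _ (norm_add_apply_pow_le m T hn))
    _ = (a + b) ^ (n - 1) * (a + b * ∫ z, ‖z‖ ^ n ∂ν) := by
        rw [integral_const_mul, integral_add (integrable_const _) (hint.const_mul _),
          integral_const_mul]
        simp
    _ ≤ (a + b) ^ (n - 1) * ((a + b) * M) := by
        gcongr
        nlinarith [norm_nonneg m, norm_nonneg T]
    _ = M * (a + b) ^ n := by
        rw [← mul_assoc, ← pow_succ, Nat.sub_add_cancel hn, mul_comm]

variable [OpensMeasurableSpace E]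

theorem integrable_norm_add_apply_pow [IsFiniteMeasure ν] (hn : 1 ≤ n)
    (hint : Integrable (fun z => ‖z‖ ^ n) ν) :
    Integrable (fun z => ‖m + T z‖ ^ n) ν :=
  (((integrable_const _).add (hint.const_mul _)).const_mul _).mono'
    (Continuous.aestronglyMeasurable (by fun_prop))
    (ae_of_all _ fun z => by
      rw [Real.norm_of_nonneg (by positivity)]; exact norm_add_apply_pow_le m T hn z)

end AffineImage

theorem sqrt_specNorm_mul_transpose {d : ℕ} (A : Matrix (Fin d) (Fin d) ℝ) :
    √(specNorm (A * Aᵀ)) = ‖A‖ := by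
  have hstar : Aᵀ = star A := by
    rw [Matrix.star_eq_conjTranspose, Matrix.conjTranspose_eq_transpose_of_trivial]
  change √‖A * Aᵀ‖ = ‖A‖
  rw [hstar, CStarRing.norm_self_mul_star, sqrt_mul_self (norm_nonneg _)]

section GaussianVec

variable {d t : ℕ} (m : EuclideanSpace ℝ (Fin d)) (A : Matrix (Fin d) (Fin d) ℝ)

theorem measurable_add_toEuclideanLin : Measurable fun z => m + Matrix.toEuclideanLin A z :=
  (continuous_const.add (LinearMap.continuous_of_finiteDimensional _)).measurable

theorem integrable_norm_pow_two_mul_gaussianVec (ht : 1 ≤ t) :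
    Integrable (fun x => ‖x‖ ^ (2 * t)) (gaussianVec m A) := by
  rw [gaussianVec, integrable_map_measure (Continuous.aestronglyMeasurable (by fun_prop))
    (measurable_add_toEuclideanLin m A).aemeasurable]
  exact integrable_norm_add_apply_pow m (Matrix.toEuclideanLin A).toContinuousLinearMap
    (by omega) (integrable_norm_pow_two_mul_stdGaussian ht)

theorem integral_norm_pow_two_mul_gaussianVec_le (hd : 1 ≤ d) (ht : 1 ≤ t) :
    ∫ x, ‖x‖ ^ (2 * t) ∂gaussianVec m A
      ≤ (d : ℝ) ^ t * (2 * t - 1 : ℕ)‼ * (‖m‖ + ‖A‖) ^ (2 * t) := by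
  rw [gaussianVec, integral_map (measurable_add_toEuclideanLin m A).aemeasurable
    (Continuous.aestronglyMeasurable (by fun_prop))]
  refine integral_norm_add_apply_pow_le m (Matrix.toEuclideanLin A).toContinuousLinearMap
    (by omega) (integrable_norm_pow_two_mul_stdGaussian ht)
    (integral_norm_pow_two_mul_stdGaussian_le ht) (one_le_mul_of_one_le_of_one_le ?_ ?_)
  · exact one_le_pow₀ (by exact_mod_cast hd)
  · exact_mod_cast Nat.doubleFactorial_pos _

end GaussianVec

theorem integral_gaussianMixture {d L : ℕ} {lam : Fin L → ℝ} (hlam : ∀ l, 0 ≤ lam l)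
    {μ : Fin L → EuclideanSpace ℝ (Fin d)} {A : Fin L → Matrix (Fin d) (Fin d) ℝ}
    {f : EuclideanSpace ℝ (Fin d) → ℝ} (hf : ∀ l, Integrable f (gaussianVec (μ l) (A l))) :
    ∫ x, f x ∂gaussianMixture lam μ A = ∑ l, lam l * ∫ x, f x ∂gaussianVec (μ l) (A l) := by
  rw [gaussianMixture, integral_finsetSum_measure fun l _ =>
    (hf l).smul_measure ENNReal.ofReal_ne_top]
  simp [integral_smul_measure, ENNReal.toReal_ofReal (hlam _)]

theorem stmt_14_general {d L : ℕ} (hd : 1 ≤ d)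
    (lam : Fin L → ℝ) (hlam : ∀ l, lam l ∈ Set.Ioo (0 : ℝ) 1)
    (μ : Fin L → EuclideanSpace ℝ (Fin d))
    (S A : Fin L → Matrix (Fin d) (Fin d) ℝ)
    (hA : ∀ l, A l * (A l)ᵀ = S l)
    (t : ℕ) (ht : 1 ≤ t) :
    (∫ x, ‖x‖ ^ (2 * t) ∂(gaussianMixture lam μ A)) ≤
      (d : ℝ) ^ t * (((2 * t).factorial : ℝ) / (2 ^ t * (t.factorial : ℝ))) *
        ∑ l, lam l * (‖μ l‖ + Real.sqrt (specNorm (S l))) ^ (2 * t) := by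
  have hlam0 : ∀ l, 0 ≤ lam l := fun l => (hlam l).1.le
  rw [integral_gaussianMixture hlam0 fun l => integrable_norm_pow_two_mul_gaussianVec _ _ ht,
    factorial_two_mul_div_eq_doubleFactorial, Finset.mul_sum]
  refine Finset.sum_le_sum fun l _ => ?_
  rw [← hA l, sqrt_specNorm_mul_transpose, mul_left_comm]
  exact mul_le_mul_of_nonneg_left (integral_norm_pow_two_mul_gaussianVec_le _ _ hd ht) (hlam0 l)

theorem stmt_14 {d L : ℕ} (hd : 1 ≤ d) (hL : 1 ≤ L)
    (lam : Fin L → ℝ) (hlam : ∀ l, lam l ∈ Set.Ioo (0 : ℝ) 1) (hsum : ∑ l, lam l = 1)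
    (μ : Fin L → EuclideanSpace ℝ (Fin d))
    (S A : Fin L → Matrix (Fin d) (Fin d) ℝ)
    (hS : ∀ l, (S l).PosSemidef) (hA : ∀ l, A l * (A l)ᵀ = S l)
    (t : ℕ) (ht : 1 ≤ t) :
    (∫ x, ‖x‖ ^ (2 * t) ∂(gaussianMixture lam μ A)) ≤
      (d : ℝ) ^ t * (((2 * t).factorial : ℝ) / (2 ^ t * (t.factorial : ℝ))) *
        ∑ l, lam l * (‖μ l‖ + Real.sqrt (specNorm (S l))) ^ (2 * t) :=
  stmt_14_general hd lam hlam μ S A hA t ht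
end
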